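/- arXiv:2111.04332 — 4 statements merged into one kernel-verified Lean document; each statement's English description precedes it below -/
import Mathlib

section
/- Let T be a rooted tree labeled by pre-order traversal, and let P be a path in T with endpoints l ≤ r and let a be a node with l in the subtree rooted at a. If lca(l,r) < a, then r lies in the interval [rmost_leaf(a)+1, n], where rmost_leaf(a) is the maximum pre-order label in the subtree rooted at a. Moreover, r is not in the subtree rooted at a and a lies on the path P. -/
open Classical

/-- A rooted tree on `n` nodes, given by a parent function. -/
structure RTree (n : ℕ) where
  parent : Fin n → Fin n
  root : Fin n
  parent_root : parent root = root
  reaches_root : ∀ v, ∃ k, parent^[k] v = root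

namespace RTree

variable {n : ℕ}

/-- `a` is an ancestor of `v` (possibly `a = v`). -/
def isAncestor (T : RTree n) (a v : Fin n) : Prop := ∃ k, T.parent^[k] v = a

/-- The set of nodes in the subtree rooted at `a`. -/
noncomputable def subtree (T : RTree n) (a : Fin n) : Finset (Fin n) :=
  Finset.univ.filter fun v => T.isAncestor a v

/-- Distance from `v` to the root. -/
noncomputable def depth (T : RTree n) (v : Fin n) : ℕ := Nat.find (T.reaches_root v)

/-- `v` is a child of `u`. -/
def isChild (T : RTree n) (v u : Fin n) : Prop := v ≠ T.root ∧ T.parent v = u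

/-- `heavy` assigns to each internal node a child of maximum subtree size (heavy child). -/
def IsHeavyChoice (T : RTree n) (heavy : Fin n → Fin n) : Prop :=
  ∀ u : Fin n, (∃ c, T.isChild c u) →
    T.isChild (heavy u) u ∧
      ∀ c, T.isChild c u → (T.subtree c).card ≤ (T.subtree (heavy u)).card

/-- The edge from `v` to its parent is a light edge. -/
def isLightTop (T : RTree n) (heavy : Fin n → Fin n) (v : Fin n) : Prop :=
  v ≠ T.root ∧ heavy (T.parent v) ≠ v

/-- `{x, y}` is a light edge of `T`. -/
def isLightEdge (T : RTree n) (heavy : Fin n → Fin n) (x y : Fin n) : Prop :=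
  (T.isChild x y ∧ heavy y ≠ x) ∨ (T.isChild y x ∧ heavy x ≠ y)

lemma parent_fix_eq_root (T : RTree n) (a : Fin n) (h : T.parent a = a) : a = T.root := by
  obtain ⟨k, hk⟩ := T.reaches_root a
  have h2 : T.parent^[k] a = a := Function.iterate_fixed h k
  rw [h2] at hk; exact hk

/-- The graph on the nodes of `T` whose edges are exactly the heavy edges. -/
def heavyGraph (T : RTree n) (heavy : Fin n → Fin n) : SimpleGraph (Fin n) where
  Adj x y := (T.isChild x y ∧ heavy y = x) ∨ (T.isChild y x ∧ heavy x = y)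
  symm := by constructor; intro x y h; tauto
  loopless := by
    constructor
    intro x h
    rcases h with ⟨⟨hne, hp⟩, _⟩ | ⟨⟨hne, hp⟩, _⟩ <;> exact hne (T.parent_fix_eq_root x hp)

/-- `a` and `b` lie on the same heavy path of the heavy path decomposition. -/
def sameHP (T : RTree n) (heavy : Fin n → Fin n) (a b : Fin n) : Prop :=
  (T.heavyGraph heavy).Reachable a b

lemma exists_common_ancestor (T : RTree n) (a b : Fin n) :
    ∃ m, T.isAncestor (T.parent^[m] a) b := by
  refine ⟨T.depth a, T.depth b, ?_⟩
  have h1 : T.parent^[T.depth b] b = T.root := Nat.find_spec (T.reaches_root b)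
  have h2 : T.parent^[T.depth a] a = T.root := Nat.find_spec (T.reaches_root a)
  rw [h1, h2]

/-- The lowest common ancestor of `a` and `b`. -/
noncomputable def lca (T : RTree n) (a b : Fin n) : Fin n :=
  T.parent^[Nat.find (T.exists_common_ancestor a b)] a

/-- The vertex set of the unique simple path between `a` and `b` in `T`. -/
def pathSet (T : RTree n) (a b : Fin n) : Set (Fin n) :=
  {w | (T.isAncestor w a ∨ T.isAncestor w b) ∧ T.isAncestor (T.lca a b) w}

lemma self_mem_subtree (T : RTree n) (a : Fin n) : a ∈ T.subtree a := by
  simp only [subtree, Finset.mem_filter, Finset.mem_univ, true_and]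
  exact ⟨0, rfl⟩

/-- The largest pre-order label in the subtree rooted at `a`. -/
noncomputable def rmostLeaf (T : RTree n) (a : Fin n) : Fin n :=
  (T.subtree a).max' ⟨a, T.self_mem_subtree a⟩

/-- The labels `1..n` of `T` form a pre-order (DFS) labelling. -/
def IsPreorder (T : RTree n) : Prop :=
  (∀ v, v ≠ T.root → T.parent v < v) ∧
    (∀ u v w : Fin n, u < v → v < w → T.isAncestor u w → T.isAncestor u v)

/-- Number of light edges on the path from the root to `v`
(the level of the heavy path of `v` in the heavy path tree). -/
noncomputable def lightDepth (T : RTree n) (heavy : Fin n → Fin n) (v : Fin n) : ℕ :=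
  ((Finset.range (T.depth v)).filter fun k => T.isLightTop heavy (T.parent^[k] v)).card

end RTree


/-! Labels decrease towards the root, so `a` cannot lie above `lca l r`; as the ancestors of `l`
form a chain, `lca l r` lies above `a`, which puts `a` on the path. Minimality of the lca then
forbids `a` from being an ancestor of `r`. In a pre-order labelling every label between `a` and a
descendant of `a` is itself a descendant of `a`, so `a ≤ l ≤ r` forces `r` past `rmostLeaf a`. -/

namespace RTree

variable {n : ℕ} (T : RTree n)

@[simp]
lemma mem_subtree {a v : Fin n} : v ∈ T.subtree a ↔ T.isAncestor a v := by
  simp [subtree]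

lemma isAncestor_iterate_of_le {i j : ℕ} (h : i ≤ j) (v : Fin n) :
    T.isAncestor (T.parent^[j] v) (T.parent^[i] v) :=
  ⟨j - i, by rw [← Function.iterate_add_apply, Nat.sub_add_cancel h]⟩

lemma isAncestor_total_of_isAncestor {a b v : Fin n} (ha : T.isAncestor a v)
    (hb : T.isAncestor b v) : T.isAncestor a b ∨ T.isAncestor b a := by
  obtain ⟨i, rfl⟩ := ha
  obtain ⟨j, rfl⟩ := hb
  rcases le_total i j with h | h
  · exact Or.inr (T.isAncestor_iterate_of_le h v)
  · exact Or.inl (T.isAncestor_iterate_of_le h v)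

lemma lca_isAncestor_left (a b : Fin n) : T.isAncestor (T.lca a b) a := ⟨_, rfl⟩

lemma isAncestor_lca_of_isAncestor {a l r : Fin n} (hl : T.isAncestor a l)
    (hr : T.isAncestor a r) : T.isAncestor a (T.lca l r) := by
  obtain ⟨k, rfl⟩ := hl
  exact T.isAncestor_iterate_of_le (Nat.find_min' (T.exists_common_ancestor l r) hr) l

namespace IsPreorder

variable {T}

lemma parent_le (hpre : T.IsPreorder) (v : Fin n) : T.parent v ≤ v := by
  by_cases h : v = T.root
  · rw [h, T.parent_root]
  · exact (hpre.1 v h).le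

lemma iterate_parent_le (hpre : T.IsPreorder) (k : ℕ) (v : Fin n) : T.parent^[k] v ≤ v := by
  induction k with
  | zero => rfl
  | succ k ih =>
    rw [Function.iterate_succ_apply']
    exact (hpre.parent_le _).trans ih

lemma le_of_isAncestor (hpre : T.IsPreorder) {a v : Fin n} (h : T.isAncestor a v) : a ≤ v := by
  obtain ⟨k, rfl⟩ := h
  exact hpre.iterate_parent_le k v

lemma mem_subtree_of_le_of_le_rmostLeaf (hpre : T.IsPreorder) {a v : Fin n} (hav : a ≤ v)
    (hv : v ≤ T.rmostLeaf a) : v ∈ T.subtree a := by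
  have hrmost : T.rmostLeaf a ∈ T.subtree a := Finset.max'_mem _ _
  rcases hav.eq_or_lt with rfl | hav
  · exact T.self_mem_subtree _
  rcases hv.eq_or_lt with hv | hv
  · rwa [hv]
  · rw [mem_subtree] at hrmost ⊢
    exact hpre.2 a v _ hav hv hrmost

end IsPreorder

end RTree

/-- pre-order labeled tree, path `P` with endpoints `l ≤ r`, `l` in the subtree
rooted at `a`. If `lca(l,r) < a` then `r` lies after `rmost_leaf a` (i.e. in
`[rmost_leaf a + 1, n]`); moreover `r` is not in the subtree rooted at `a`, and `a` lies on
the path `P`. -/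
theorem stmt6 {n : ℕ} (T : RTree n) (hpre : T.IsPreorder) (l r a : Fin n)
    (hlr : l ≤ r) (hla : l ∈ T.subtree a) (hlca : T.lca l r < a) :
    T.rmostLeaf a < r ∧ r ∉ T.subtree a ∧ a ∈ T.pathSet l r := by
  rw [RTree.mem_subtree] at hla
  have ha_not_above_lca : ¬ T.isAncestor a (T.lca l r) := fun h =>
    (hpre.le_of_isAncestor h).not_gt hlca
  have hlca_above_a : T.isAncestor (T.lca l r) a :=
    (T.isAncestor_total_of_isAncestor hla (T.lca_isAncestor_left l r)).resolve_left
      ha_not_above_lca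
  have hr : r ∉ T.subtree a := fun hr =>
    ha_not_above_lca (T.isAncestor_lca_of_isAncestor hla ((T.mem_subtree).1 hr))
  refine ⟨?_, hr, Or.inl hla, hlca_above_a⟩
  by_contra! hle
  exact hr (hpre.mem_subtree_of_le_of_le_rmostLeaf ((hpre.le_of_isAncestor hla).trans hlr) hle)
end

section
/- Let T be a rooted tree with heavy path decomposition and heavy path tree 𝒯. Let P_v be any path in T. Then P_v has non-empty intersection with at most two heavy paths whose corresponding nodes lie at any fixed level l of 𝒯. -/
open Classical

/-! Going up from a vertex, the light depth never decreases and stays constant exactly along heavy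
edges. Hence the ancestors of a vertex at a fixed light depth `l` all lie on one heavy path, and a
path `P` from `a` to `b`, being contained in the ancestors of `a` and of `b`, meets at most two
heavy paths of level `l`. -/

namespace RTree

variable {n : ℕ} (T : RTree n) (heavy : Fin n → Fin n)

lemma depth_eq_depth_parent_add_one {v : Fin n} (hv : v ≠ T.root) :
    T.depth v = T.depth (T.parent v) + 1 := by
  have hup : T.parent^[T.depth (T.parent v) + 1] v = T.root := by
    rw [Function.iterate_succ_apply]
    exact Nat.find_spec (T.reaches_root (T.parent v))
  have hle : T.depth v ≤ T.depth (T.parent v) + 1 := Nat.find_min' _ hup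
  have hroot : T.parent^[T.depth v] v = T.root := Nat.find_spec (T.reaches_root v)
  obtain ⟨m, hm⟩ : ∃ m, T.depth v = m + 1 :=
    Nat.exists_eq_succ_of_ne_zero fun h0 => hv (by rwa [h0] at hroot)
  have hspec : T.parent^[m] (T.parent v) = T.root := by
    rwa [hm, Function.iterate_succ_apply] at hroot
  have hge : T.depth (T.parent v) ≤ m := Nat.find_min' _ hspec
  omega

lemma lightDepth_eq_lightDepth_parent_add (v : Fin n) :
    T.lightDepth heavy v =
      T.lightDepth heavy (T.parent v) + if T.isLightTop heavy v then 1 else 0 := by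
  by_cases hv : v = T.root
  · have hd : T.depth v = 0 := Nat.le_zero.mp (Nat.find_min' (T.reaches_root v) hv)
    have hnl : ¬ T.isLightTop heavy v := fun h => h.1 hv
    have hp : T.parent v = v := hv ▸ T.parent_root
    simp [lightDepth, hp, hd, hnl]
  · unfold lightDepth
    rw [T.depth_eq_depth_parent_add_one hv, Finset.card_filter, Finset.card_filter,
      Finset.sum_range_succ']
    simp only [Function.iterate_succ_apply, Function.iterate_zero_apply]
    rfl

lemma lightDepth_parent_le (v : Fin n) :
    T.lightDepth heavy (T.parent v) ≤ T.lightDepth heavy v := by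
  rw [T.lightDepth_eq_lightDepth_parent_add heavy v]
  omega

lemma lightDepth_iterate_parent_le (v : Fin n) (j : ℕ) :
    T.lightDepth heavy (T.parent^[j] v) ≤ T.lightDepth heavy v := by
  induction j with
  | zero => exact le_rfl
  | succ j ih =>
    rw [Function.iterate_succ_apply']
    exact (T.lightDepth_parent_le heavy _).trans ih

lemma sameHP_parent_of_lightDepth_eq {v : Fin n}
    (h : T.lightDepth heavy (T.parent v) = T.lightDepth heavy v) :
    T.sameHP heavy v (T.parent v) := by
  by_cases hv : v = T.root
  · rw [hv, T.parent_root]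
    exact SimpleGraph.Reachable.refl _
  · have hnl : ¬ T.isLightTop heavy v := by
      intro hl
      have := T.lightDepth_eq_lightDepth_parent_add heavy v
      rw [if_pos hl] at this
      omega
    have hheavy : heavy (T.parent v) = v := by
      by_contra hne
      exact hnl ⟨hv, hne⟩
    exact SimpleGraph.Adj.reachable (Or.inl ⟨⟨hv, rfl⟩, hheavy⟩)

lemma sameHP_iterate_parent_of_lightDepth_eq (v : Fin n) (j : ℕ)
    (h : T.lightDepth heavy (T.parent^[j] v) = T.lightDepth heavy v) :
    T.sameHP heavy v (T.parent^[j] v) := by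
  induction j with
  | zero => exact SimpleGraph.Reachable.refl v
  | succ j ih =>
    rw [Function.iterate_succ_apply'] at h ⊢
    have hup := T.lightDepth_parent_le heavy (T.parent^[j] v)
    have hdown := T.lightDepth_iterate_parent_le heavy v j
    exact (ih (by omega)).trans (T.sameHP_parent_of_lightDepth_eq heavy (by omega))

lemma sameHP_of_isAncestor_of_lightDepth_eq {v x y : Fin n} (hx : T.isAncestor x v)
    (hy : T.isAncestor y v) (h : T.lightDepth heavy x = T.lightDepth heavy y) :
    T.sameHP heavy x y := by
  obtain ⟨k, rfl⟩ := hx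
  obtain ⟨k', rfl⟩ := hy
  rcases le_total k k' with hle | hle
  · rw [← Nat.sub_add_cancel hle, Function.iterate_add_apply] at h ⊢
    exact T.sameHP_iterate_parent_of_lightDepth_eq heavy _ _ h.symm
  · rw [← Nat.sub_add_cancel hle, Function.iterate_add_apply] at h ⊢
    exact (T.sameHP_iterate_parent_of_lightDepth_eq heavy _ _ h).symm

lemma setOf_sameHP_eq_of_sameHP {u w : Fin n} (h : T.sameHP heavy u w) :
    {x | T.sameHP heavy u x} = {x | T.sameHP heavy w x} :=
  Set.ext fun _ => ⟨h.symm.trans, h.trans⟩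

def heavyPathsAbove (v : Fin n) (l : ℕ) : Set (Set (Fin n)) :=
  {S | (∃ u, S = {w | T.sameHP heavy u w}) ∧
    ∃ w, T.isAncestor w v ∧ w ∈ S ∧ T.lightDepth heavy w = l}

lemma heavyPathsAbove_subsingleton (v : Fin n) (l : ℕ) :
    (T.heavyPathsAbove heavy v l).Subsingleton := by
  rintro _ ⟨⟨u, rfl⟩, x, hx, hux, rfl⟩ _ ⟨⟨u', rfl⟩, y, hy, hu'y, hl⟩
  have hxy := T.sameHP_of_isAncestor_of_lightDepth_eq heavy hx hy hl.symm
  rw [T.setOf_sameHP_eq_of_sameHP heavy hux, T.setOf_sameHP_eq_of_sameHP heavy hu'y,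
    T.setOf_sameHP_eq_of_sameHP heavy hxy]

end RTree

theorem stmt12_general {n : ℕ} (T : RTree n) (heavy : Fin n → Fin n)
    (a b : Fin n) (l : ℕ) :
    {S : Set (Fin n) | (∃ u, S = {w | T.sameHP heavy u w}) ∧
        ∃ w ∈ T.pathSet a b, w ∈ S ∧ T.lightDepth heavy w = l}.ncard ≤ 2 := by
  have hsub : {S : Set (Fin n) | (∃ u, S = {w | T.sameHP heavy u w}) ∧
      ∃ w ∈ T.pathSet a b, w ∈ S ∧ T.lightDepth heavy w = l} ⊆
      T.heavyPathsAbove heavy a l ∪ T.heavyPathsAbove heavy b l := by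
    rintro S ⟨hS, w, ⟨ha | hb, -⟩, hwS, hl⟩
    · exact Or.inl ⟨hS, w, ha, hwS, hl⟩
    · exact Or.inr ⟨hS, w, hb, hwS, hl⟩
  calc _ ≤ (T.heavyPathsAbove heavy a l ∪ T.heavyPathsAbove heavy b l).ncard :=
        Set.ncard_le_ncard hsub
    _ ≤ (T.heavyPathsAbove heavy a l).ncard + (T.heavyPathsAbove heavy b l).ncard :=
        Set.ncard_union_le _ _
    _ ≤ 1 + 1 := by
        gcongr <;>
          exact Set.ncard_le_one_iff_subsingleton.mpr (T.heavyPathsAbove_subsingleton heavy _ l)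

/-- a path `P` in `T` has non-empty intersection with at most two heavy paths
lying at any fixed level `l` of the heavy path tree (the level of a heavy path being the
number of light edges from the root to any of its members). -/
theorem stmt12 {n : ℕ} (T : RTree n) (heavy : Fin n → Fin n) (hh : T.IsHeavyChoice heavy)
    (a b : Fin n) (l : ℕ) :
    {S : Set (Fin n) | (∃ u, S = {w | T.sameHP heavy u w}) ∧
        ∃ w ∈ T.pathSet a b, w ∈ S ∧ T.lightDepth heavy w = l}.ncard ≤ 2 :=
  stmt12_general T heavy a b l
end

section
/- Let T be a tree with heavy path decomposition and let P_u, P_v be paths in T. Then P_u and P_v intersect (share a vertex) if and only if either (1) there is a light edge {w,w'} of T such that both P_u and P_v contain both endpoints' heavy paths, i.e., both intersect H_w and H_{w'} where {Φ(H_w),Φ(H_{w'})} is an edge of the heavy path tree, or (2) there exists a heavy path H such that the paths P_u ∩ H and P_v ∩ H are both nonempty and intersect each other. -/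
open Classical

/-!
A path `P` in a tree contains a vertex `x` as soon as it contains both a descendant and a
non-descendant of `x`. For a light edge from `x` up to `y = parent x`, the heavy path `H_x`
starts at `x`, so it lies inside the subtree of `x`, while `H_y` avoids that subtree. Hence a
path meeting both `H_x` and `H_y` passes through `x`, and in case (1) both paths contain `x`.
Case (2) and the converse are immediate.
-/

lemma SimpleGraph.Reachable.mem_of_adj_closed {V : Type*} {G : SimpleGraph V} {S : Set V}
    (hS : ∀ u v, u ∈ S → G.Adj u v → v ∈ S) {a b : V} (h : G.Reachable a b) (ha : a ∈ S) :
    b ∈ S := by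
  rw [SimpleGraph.reachable_iff_reflTransGen] at h
  induction h with
  | refl => exact ha
  | tail _ hadj ih => exact hS _ _ ih hadj

namespace RTree

variable {n : ℕ} (T : RTree n)

lemma isAncestor_refl (a : Fin n) : T.isAncestor a a := ⟨0, rfl⟩

lemma isAncestor_parent (a : Fin n) : T.isAncestor (T.parent a) a := ⟨1, rfl⟩

lemma isAncestor_trans {a b c : Fin n} (hab : T.isAncestor a b) (hbc : T.isAncestor b c) :
    T.isAncestor a c := by
  obtain ⟨k, rfl⟩ := hab
  obtain ⟨j, rfl⟩ := hbc
  exact ⟨k + j, Function.iterate_add_apply _ _ _ _⟩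

lemma eq_root_of_iterate_eq_self {a : Fin n} {m : ℕ} (hm : 0 < m) (h : T.parent^[m] a = a) :
    a = T.root := by
  set d := T.depth a
  have hd : T.parent^[d] a = T.root := Nat.find_spec (T.reaches_root a)
  have hper : Function.IsPeriodicPt T.parent (m * d) a :=
    Function.IsPeriodicPt.mul_const h d
  calc a = T.parent^[m * d] a := hper.eq.symm
    _ = T.parent^[m * d - d] (T.parent^[d] a) := by
      rw [← Function.iterate_add_apply, Nat.sub_add_cancel (Nat.le_mul_of_pos_left d hm)]
    _ = T.root := by rw [hd, Function.iterate_fixed T.parent_root]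

lemma isAncestor_antisymm {a b : Fin n} (hab : T.isAncestor a b) (hba : T.isAncestor b a) :
    a = b := by
  obtain ⟨k, rfl⟩ := hab
  obtain ⟨j, hj⟩ := hba
  rcases Nat.eq_zero_or_pos (k + j) with hzero | hpos
  · rw [Nat.add_eq_zero_iff.mp hzero |>.1, Function.iterate_zero_apply]
  · have hroot : T.parent^[k] b = T.root :=
      T.eq_root_of_iterate_eq_self hpos (by rw [Function.iterate_add_apply, hj])
    rw [hroot, ← hj, hroot, Function.iterate_fixed T.parent_root]

lemma isAncestor_total_of_isAncestor_s13 {a b c : Fin n} (hac : T.isAncestor a c)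
    (hbc : T.isAncestor b c) : T.isAncestor a b ∨ T.isAncestor b a := by
  obtain ⟨i, rfl⟩ := hac
  obtain ⟨j, rfl⟩ := hbc
  rcases le_total i j with h | h
  · exact .inr ⟨j - i, by rw [← Function.iterate_add_apply, Nat.sub_add_cancel h]⟩
  · exact .inl ⟨i - j, by rw [← Function.iterate_add_apply, Nat.sub_add_cancel h]⟩

lemma mem_pathSet_of_isAncestor_of_not_isAncestor {p q a b x : Fin n}
    (ha : a ∈ T.pathSet p q) (hb : b ∈ T.pathSet p q) (hxa : T.isAncestor x a)
    (hxb : ¬ T.isAncestor x b) : x ∈ T.pathSet p q := by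
  obtain ⟨ha_end, ha_lca⟩ := ha
  rcases T.isAncestor_total_of_isAncestor_s13 hxa ha_lca with hx_lca | hlca_x
  · exact absurd (T.isAncestor_trans hx_lca hb.2) hxb
  · exact ⟨ha_end.imp (T.isAncestor_trans hxa) (T.isAncestor_trans hxa), hlca_x⟩

variable {T} {heavy : Fin n → Fin n}

lemma isAncestor_of_sameHP {x w : Fin n} (hx : heavy (T.parent x) ≠ x)
    (h : T.sameHP heavy x w) : T.isAncestor x w := by
  refine h.mem_of_adj_closed (S := {w | T.isAncestor x w}) ?_ (T.isAncestor_refl x)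
  rintro u v ⟨k, rfl⟩ (⟨⟨-, hpu⟩, hheavy⟩ | ⟨⟨-, rfl⟩, -⟩)
  · cases k with
    | zero => exact absurd (hpu ▸ hheavy) hx
    | succ k => exact ⟨k, by rw [Function.iterate_succ_apply, hpu]⟩
  · exact ⟨k + 1, rfl⟩

lemma not_isAncestor_of_sameHP_parent {x y w : Fin n} (hc : T.isChild x y)
    (hl : heavy y ≠ x) (h : T.sameHP heavy y w) : ¬ T.isAncestor x w := by
  refine h.mem_of_adj_closed (S := {w | ¬ T.isAncestor x w}) ?_ ?_
  · rintro u v hu (⟨⟨-, rfl⟩, -⟩ | ⟨⟨-, hpv⟩, hheavy⟩) ⟨k, hk⟩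
    · exact hu (T.isAncestor_trans ⟨k, hk⟩ (T.isAncestor_parent u))
    · cases k with
      | zero =>
        rw [Function.iterate_zero_apply] at hk
        subst hk
        exact hl (hc.2 ▸ hpv ▸ hheavy)
      | succ k => exact hu ⟨k, by rw [← hk, Function.iterate_succ_apply, hpv]⟩
  · intro hxy
    have hyx : T.isAncestor y x := hc.2 ▸ T.isAncestor_parent x
    exact hc.1 (T.parent_fix_eq_root x (by rw [hc.2, ← T.isAncestor_antisymm hxy hyx]))

lemma mem_pathSet_of_lightEdge {p q a b x y : Fin n} (hc : T.isChild x y) (hl : heavy y ≠ x)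
    (ha : a ∈ T.pathSet p q) (hax : T.sameHP heavy x a) (hb : b ∈ T.pathSet p q)
    (hby : T.sameHP heavy y b) : x ∈ T.pathSet p q :=
  T.mem_pathSet_of_isAncestor_of_not_isAncestor ha hb
    (isAncestor_of_sameHP (by rwa [hc.2]) hax) (not_isAncestor_of_sameHP_parent hc hl hby)

end RTree

theorem stmt13_general {n : ℕ} (T : RTree n) (heavy : Fin n → Fin n)
    (u1 u2 v1 v2 : Fin n) :
    (T.pathSet u1 u2 ∩ T.pathSet v1 v2).Nonempty ↔
      ((∃ x y : Fin n, T.isChild x y ∧ heavy y ≠ x ∧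
          (T.pathSet u1 u2 ∩ {w | T.sameHP heavy x w}).Nonempty ∧
          (T.pathSet u1 u2 ∩ {w | T.sameHP heavy y w}).Nonempty ∧
          (T.pathSet v1 v2 ∩ {w | T.sameHP heavy x w}).Nonempty ∧
          (T.pathSet v1 v2 ∩ {w | T.sameHP heavy y w}).Nonempty) ∨
        (∃ h : Fin n,
          (T.pathSet u1 u2 ∩ {w | T.sameHP heavy h w}).Nonempty ∧
          (T.pathSet v1 v2 ∩ {w | T.sameHP heavy h w}).Nonempty ∧
          (T.pathSet u1 u2 ∩ T.pathSet v1 v2 ∩ {w | T.sameHP heavy h w}).Nonempty)) := by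
  constructor
  · rintro ⟨w, hwu, hwv⟩
    exact .inr ⟨w, ⟨w, hwu, .refl w⟩, ⟨w, hwv, .refl w⟩, ⟨w, ⟨hwu, hwv⟩, .refl w⟩⟩
  · rintro (⟨x, y, hc, hl, ⟨a, hau, hax⟩, ⟨b, hbu, hby⟩, ⟨c, hcv, hcx⟩, ⟨d, hdv, hdy⟩⟩ |
      ⟨-, -, -, ⟨w, hw, -⟩⟩)
    · exact ⟨x, RTree.mem_pathSet_of_lightEdge hc hl hau hax hbu hby,
        RTree.mem_pathSet_of_lightEdge hc hl hcv hcx hdv hdy⟩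
    · exact ⟨w, hw⟩

/-- two paths `P_u` (between `u1, u2`) and `P_v` (between `v1, v2`) share a
vertex iff either (1) there is a light edge `{x, y}` of `T` such that both paths intersect
both heavy paths `H_x` and `H_y`, or (2) there is a heavy path `H` such that `P_u ∩ H` and
`P_v ∩ H` are both nonempty and intersect each other. -/
theorem stmt13 {n : ℕ} (T : RTree n) (heavy : Fin n → Fin n) (hh : T.IsHeavyChoice heavy)
    (u1 u2 v1 v2 : Fin n) :
    (T.pathSet u1 u2 ∩ T.pathSet v1 v2).Nonempty ↔
      ((∃ x y : Fin n, T.isChild x y ∧ heavy y ≠ x ∧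
          (T.pathSet u1 u2 ∩ {w | T.sameHP heavy x w}).Nonempty ∧
          (T.pathSet u1 u2 ∩ {w | T.sameHP heavy y w}).Nonempty ∧
          (T.pathSet v1 v2 ∩ {w | T.sameHP heavy x w}).Nonempty ∧
          (T.pathSet v1 v2 ∩ {w | T.sameHP heavy y w}).Nonempty) ∨
        (∃ h : Fin n,
          (T.pathSet u1 u2 ∩ {w | T.sameHP heavy h w}).Nonempty ∧
          (T.pathSet v1 v2 ∩ {w | T.sameHP heavy h w}).Nonempty ∧
          (T.pathSet u1 u2 ∩ T.pathSet v1 v2 ∩ {w | T.sameHP heavy h w}).Nonempty)) :=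
  stmt13_general T heavy u1 u2 v1 v2
end

section
/- Every maximal clique of a chordal graph contains a simplicial vertex of the graph, or fails to be contained in any other maximal clique; consequently, in a clique tree T of a path graph G, for every node a of T there exists a path P = (l, r) in the path representation such that lca(l,r) = a, where T is rooted arbitrarily. -/
open Classical

/-! A non-root node `a` has a clique not contained in that of its parent, so some path `P_v`
passes through `a` but not through `T.parent a`. Every node of a path other than its top
`lca` has its parent on the path too, so `a` is the top of `P_v`. At the root, any path
through it has its top there. -/

namespace RTree

variable {n : ℕ} {T : RTree n} {a b v w : Fin n}

theorem isAncestor.parent_left (h : T.isAncestor a v) : T.isAncestor (T.parent a) v := by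
  obtain ⟨k, hk⟩ := h
  exact ⟨k + 1, by rw [Function.iterate_succ_apply', hk]⟩

theorem isAncestor.parent_right_of_ne (h : T.isAncestor a v) (hne : a ≠ v) :
    T.isAncestor a (T.parent v) := by
  obtain ⟨_ | k, hk⟩ := h
  · exact absurd hk.symm hne
  · exact ⟨k, by rwa [← Function.iterate_succ_apply]⟩

theorem eq_root_of_isAncestor_root (h : T.isAncestor a T.root) : a = T.root := by
  obtain ⟨k, hk⟩ := h
  rw [← hk, Function.iterate_fixed T.parent_root]

theorem parent_mem_pathSet (hw : w ∈ T.pathSet a b) (hne : T.lca a b ≠ w) :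
    T.parent w ∈ T.pathSet a b :=
  ⟨hw.1.imp isAncestor.parent_left isAncestor.parent_left, hw.2.parent_right_of_ne hne⟩

end RTree

/-- clique tree setting. `T` is a (rooted) clique tree on `N` nodes of a path
graph on `m` vertices, vertex `v` corresponding to the path between `L v` and `R v`.
The clique of a node `a` is `C a = {v | a ∈ P_v}`. The hypotheses say each node's clique is
nonempty and is a *maximal* clique (not contained in the clique of any other node).
Then for every node `a` of `T` there exists a path `P_v` whose endpoints have `lca` exactly
`a`. -/
theorem stmt14 {N m : ℕ} (T : RTree N) (L R : Fin m → Fin N)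
    (hnonempty : ∀ a : Fin N, ∃ v : Fin m, a ∈ T.pathSet (L v) (R v))
    (hmax : ∀ a b : Fin N, a ≠ b →
      ∃ v : Fin m, a ∈ T.pathSet (L v) (R v) ∧ b ∉ T.pathSet (L v) (R v)) :
    ∀ a : Fin N, ∃ v : Fin m, T.lca (L v) (R v) = a := by
  intro a
  by_cases ha : a = T.root
  · subst ha
    obtain ⟨v, hv⟩ := hnonempty T.root
    exact ⟨v, RTree.eq_root_of_isAncestor_root hv.2⟩
  · have hparent : a ≠ T.parent a := fun h => ha (T.parent_fix_eq_root a h.symm)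
    obtain ⟨v, hv, hv_parent⟩ := hmax a (T.parent a) hparent
    exact ⟨v, by_contra fun hlca => hv_parent (RTree.parent_mem_pathSet hv hlca)⟩
end
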